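/- arXiv:2110.04720 — 2 statements merged into one kernel-verified Lean document; each statement's English description precedes it below -/
import Mathlib

section
/- (Perturbation anticommuting with the homotopy.) Let (φ, ψ, h) be a contraction from a differential module (P, δ) onto a differential module (T, d) over a commutative ring R, and let ϱ : P → P be an R-linear map such that (δ + ϱ) ∘ (δ + ϱ) = 0 and h ∘ ϱ = − ϱ ∘ h. Then for every k ≥ 1 one has φ ∘ (ϱ ∘ h)^k = 0, (h ∘ ϱ)^k ∘ ψ = 0, and h ∘ (ϱ ∘ h)^k = 0; moreover (d + φ ∘ ϱ ∘ ψ) ∘ (d + φ ∘ ϱ ∘ ψ) = 0, and the original triple (φ, ψ, h) is a contraction from the differential module (P, δ + ϱ) onto the differential module (T, d + φ ∘ ϱ ∘ ψ). -/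
/-- A contraction from a differential module `(P, δ)` onto a differential module `(T, d)`
over a commutative ring `R`: a triple of `R`-linear maps `(φ, ψ, h)` such that `φ` and `ψ`
are cochain maps, `φ ∘ ψ = id`, `ψ ∘ φ = id + δ ∘ h + h ∘ δ`, together with the side
conditions `h ∘ h = 0`, `φ ∘ h = 0`, `h ∘ ψ = 0`.  We also record that `δ` and `d` are
differentials, i.e. square to zero. -/
def IsContraction {R : Type*} [CommRing R] {P T : Type*}
    [AddCommGroup P] [Module R P] [AddCommGroup T] [Module R T]
    (δ : P →ₗ[R] P) (d : T →ₗ[R] T)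
    (φ : P →ₗ[R] T) (ψ : T →ₗ[R] P) (h : P →ₗ[R] P) : Prop :=
  δ ∘ₗ δ = 0 ∧ d ∘ₗ d = 0 ∧
  φ ∘ₗ δ = d ∘ₗ φ ∧ ψ ∘ₗ d = δ ∘ₗ ψ ∧
  φ ∘ₗ ψ = LinearMap.id ∧
  ψ ∘ₗ φ = LinearMap.id + δ ∘ₗ h + h ∘ₗ δ ∧
  h ∘ₗ h = 0 ∧ φ ∘ₗ h = 0 ∧ h ∘ₗ ψ = 0

/-- Perturbation anticommuting with the homotopy. -/
theorem perturbation_anticommuting_with_homotopy {R : Type*} [CommRing R] {P T : Type*}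
    [AddCommGroup P] [Module R P] [AddCommGroup T] [Module R T]
    (δ : P →ₗ[R] P) (d : T →ₗ[R] T)
    (φ : P →ₗ[R] T) (ψ : T →ₗ[R] P) (h : P →ₗ[R] P)
    (hc : IsContraction δ d φ ψ h)
    (ϱ : P →ₗ[R] P) (hϱ : (δ + ϱ) ∘ₗ (δ + ϱ) = 0)
    (hanti : h ∘ₗ ϱ = - (ϱ ∘ₗ h)) :
    (∀ k : ℕ, 1 ≤ k →
      φ ∘ₗ ((ϱ ∘ₗ h) ^ k) = 0 ∧ ((h ∘ₗ ϱ) ^ k) ∘ₗ ψ = 0 ∧ h ∘ₗ ((ϱ ∘ₗ h) ^ k) = 0) ∧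
    (d + φ ∘ₗ ϱ ∘ₗ ψ) ∘ₗ (d + φ ∘ₗ ϱ ∘ₗ ψ) = 0 ∧
    IsContraction (δ + ϱ) (d + φ ∘ₗ ϱ ∘ₗ ψ) φ ψ h := by
  obtain ⟨hδδ, hdd, hφδ, hψd, hφψ, hψφ, hhh, hφh, hhψ⟩ := hc
  have pδδ : ∀ x : P, δ (δ x) = 0 := fun x => by simpa using LinearMap.ext_iff.mp hδδ x
  have pdd : ∀ x : T, d (d x) = 0 := fun x => by simpa using LinearMap.ext_iff.mp hdd x
  have pφδ : ∀ x : P, φ (δ x) = d (φ x) := fun x => by simpa using LinearMap.ext_iff.mp hφδ x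
  have pψd : ∀ x : T, ψ (d x) = δ (ψ x) := fun x => by simpa using LinearMap.ext_iff.mp hψd x
  have pφψ : ∀ x : T, φ (ψ x) = x := fun x => by simpa using LinearMap.ext_iff.mp hφψ x
  have pψφ : ∀ x : P, ψ (φ x) = x + δ (h x) + h (δ x) := fun x => by
    simpa using LinearMap.ext_iff.mp hψφ x
  have phh : ∀ x : P, h (h x) = 0 := fun x => by simpa using LinearMap.ext_iff.mp hhh x
  have pφh : ∀ x : P, φ (h x) = 0 := fun x => by simpa using LinearMap.ext_iff.mp hφh x
  have phψ : ∀ x : T, h (ψ x) = 0 := fun x => by simpa using LinearMap.ext_iff.mp hhψ x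
  have phϱ : ∀ x : P, h (ϱ x) = -ϱ (h x) := fun x => by
    simpa using LinearMap.ext_iff.mp hanti x
  have pϱh : ∀ x : P, ϱ (h x) = -h (ϱ x) := fun x => by rw [phϱ, neg_neg]
  have pδϱ : ∀ x : P, δ (ϱ x) = -(ϱ (δ x) + ϱ (ϱ x)) := by
    intro x
    have e := LinearMap.ext_iff.mp hϱ x
    simp only [LinearMap.add_apply, LinearMap.comp_apply, LinearMap.zero_apply, map_add,
      pδδ, zero_add] at e
    have : δ (ϱ x) + (ϱ (δ x) + ϱ (ϱ x)) = 0 := by rw [← e]; abel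
    exact eq_neg_of_add_eq_zero_left this
  -- composite zero lemmas
  have L1 : ∀ x : P, φ (ϱ (h x)) = 0 := fun x => by rw [pϱh, map_neg, pφh, neg_zero]
  have L2 : ∀ x : T, h (ϱ (ψ x)) = 0 := fun x => by rw [phϱ, phψ, map_zero, neg_zero]
  have L3 : ∀ x : P, h (ϱ (h x)) = 0 := fun x => by rw [phϱ, phh]; simp
  have L4 : ∀ x : P, φ (ϱ (δ (h x))) = 0 := by
    intro x
    have : ϱ (δ (h x)) = -(δ (ϱ (h x)) + ϱ (ϱ (h x))) := by
      rw [pδϱ (h x)]; abel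
    rw [this, map_neg, map_add, pφδ, L1, map_zero]
    have : φ (ϱ (ϱ (h x))) = 0 := by
      rw [pϱh, map_neg, map_neg, L1, neg_zero]
    rw [this]; simp
  have L5 : ∀ x : T, h (δ (ϱ (ψ x))) = 0 := by
    intro x
    rw [pδϱ, map_neg, map_add, phϱ, phϱ]
    have e1 : h (δ (ψ x)) = 0 := by rw [← pψd, phψ]
    rw [L2, e1]; simp
  have Mφ : φ ∘ₗ (ϱ ∘ₗ h) = 0 := by ext x; simpa using L1 x
  have Mh : h ∘ₗ (ϱ ∘ₗ h) = 0 := by ext x; simpa using L3 x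
  have Mψ : (h ∘ₗ ϱ) ∘ₗ ψ = 0 := by ext x; simpa using L2 x
  have dsq : (d + φ ∘ₗ ϱ ∘ₗ ψ) ∘ₗ (d + φ ∘ₗ ϱ ∘ₗ ψ) = 0 := by
    ext t
    simp only [LinearMap.comp_apply, LinearMap.add_apply, LinearMap.zero_apply, map_add]
    rw [pdd, pψd, pψφ (ϱ (ψ t)), L2, L5]
    simp only [map_zero, add_zero, zero_add]
    rw [← pφδ (ϱ (ψ t)), pδϱ (ψ t), map_neg, map_add]
    abel
  refine ⟨?_, dsq, ?_⟩
  · intro k hk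
    obtain ⟨n, rfl⟩ : ∃ n, k = n + 1 := ⟨k - 1, (Nat.succ_pred_eq_of_pos hk).symm⟩
    refine ⟨?_, ?_, ?_⟩
    · rw [pow_succ', Module.End.mul_eq_comp, ← LinearMap.comp_assoc, Mφ, LinearMap.zero_comp]
    · rw [pow_succ, Module.End.mul_eq_comp, LinearMap.comp_assoc, Mψ, LinearMap.comp_zero]
    · rw [pow_succ', Module.End.mul_eq_comp, ← LinearMap.comp_assoc, Mh, LinearMap.zero_comp]
  · refine ⟨hϱ, dsq, ?_, ?_, hφψ, ?_, hhh, hφh, hhψ⟩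
    · ext x
      simp only [LinearMap.comp_apply, LinearMap.add_apply, map_add]
      rw [pφδ, pψφ x]
      simp only [map_add]
      rw [L4, L1]
      simp
    · ext t
      simp only [LinearMap.comp_apply, LinearMap.add_apply, map_add]
      rw [pψd, pψφ (ϱ (ψ t)), L2, L5]
      simp
    · ext x
      simp only [LinearMap.comp_apply, LinearMap.add_apply, LinearMap.id_apply, map_add]
      rw [pψφ x, phϱ]
      abel
end

section
/- (Exponential form of the Todd power series.) In the ring ℚ⟦X⟧ of formal power series over ℚ, the following identity holds: Σ_{n≥0} (−1)^n (B_n/n!) X^n = exp( − Σ_{k≥1} (B_k/(k · k!)) X^k ), where B_n denotes the n-th Bernoulli number with the convention B_1 = −1/2, and exp on the right-hand side is the formal power series exponential of a series with zero constant term. Equivalently, the power series P(X) characterized by P(X) · (1 − exp(−X)) = X (i.e., P(X) = X/(1 − e^{−X}) = Σ_{n≥0} (−1)^n B_n X^n/n!) satisfies P(X) = exp( − Σ_{k≥1} B_k X^k/(k · k!) ). -/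
/-! Put `G = -Σ_{k ≥ 1} B_k X^k / (k·k!)`, so that `X·G' = 1 - X/(e^X - 1)`. Both `P` and `exp(G)`
solve the linear equation `Y' = G'·Y` with `Y(0) = 1`: for `exp(G)` this is the chain rule, and for
`P` it follows by differentiating `P·(e^X - 1) = X·e^X` and using `X/(e^X - 1) = P - X` (the two
Bernoulli conventions differ only in `B_1`). Such an equation has at most one solution in `ℚ⟦X⟧`,
because it determines each coefficient from the lower ones. -/

/-- The formal exponential `exp(g) = Σ_{m ≥ 0} g^m / m!` of a formal power series `g` over
`ℚ` (intended for `g` with zero constant term, in which case the coefficient of `X^n` only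
receives contributions from the finitely many terms with `m ≤ n`, as encoded here). -/
noncomputable def formalExp (g : PowerSeries ℚ) : PowerSeries ℚ :=
  PowerSeries.mk fun n =>
    ∑ m ∈ Finset.range (n + 1), PowerSeries.coeff n (g ^ m) / (m.factorial : ℚ)

/-- The Todd power series `P(X) = X/(1 - e^{-X}) = Σ_{n ≥ 0} (-1)^n B_n X^n / n!`,
where `B_n` is the `n`-th Bernoulli number (convention `B_1 = -1/2`). -/
noncomputable def toddSeries : PowerSeries ℚ :=
  PowerSeries.mk fun n => (-1) ^ n * bernoulli n / (n.factorial : ℚ)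

open PowerSeries

namespace PowerSeries

variable {R : Type*} [CommRing R]

theorem coeff_pow_eq_zero_of_lt {g : R⟦X⟧} (hg : constantCoeff g = 0) {n m : ℕ} (h : n < m) :
    coeff n (g ^ m) = 0 :=
  coeff_of_lt_order n ((Nat.cast_lt.mpr h).trans_le (le_order_pow_of_constantCoeff_eq_zero m hg))

theorem eq_of_derivative_eq_mul_self [IsAddTorsionFree R] {h P Q : R⟦X⟧}
    (hP : d⁄dX R P = h * P) (hQ : d⁄dX R Q = h * Q) (h0 : constantCoeff P = constantCoeff Q) :
    P = Q := by
  ext n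
  induction n using Nat.strong_induction_on with
  | _ n ih =>
    cases n with
    | zero => simpa using h0
    | succ n =>
      have hder : coeff n (d⁄dX R P) = coeff n (d⁄dX R Q) := by
        rw [hP, hQ, coeff_mul, coeff_mul]
        refine Finset.sum_congr rfl fun p hp => ?_
        rw [ih p.2 (by rw [Finset.HasAntidiagonal.mem_antidiagonal] at hp; omega)]
      rw [coeff_derivative, coeff_derivative] at hder
      exact (nsmul_right_injective n.succ_ne_zero) (by simpa [nsmul_eq_mul, mul_comm] using hder)

theorem derivative_subst_exp [Algebra ℚ R] {g : R⟦X⟧} (hg : HasSubst g) :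
    d⁄dX R ((exp R).subst g) = d⁄dX R g * (exp R).subst g := by
  rw [derivative_subst hg, derivative_exp, mul_comm]

theorem exp_sub_one_ne_zero [Algebra ℚ R] [Nontrivial R] : exp R - 1 ≠ 0 := fun h => by
  simpa using congrArg (coeff 1) h

end PowerSeries

theorem formalExp_eq_subst_exp {g : ℚ⟦X⟧} (hg : constantCoeff g = 0) :
    formalExp g = (exp ℚ).subst g := by
  ext n
  rw [formalExp, coeff_mk, coeff_subst' (HasSubst.of_constantCoeff_zero' hg),
    finsum_eq_sum_of_support_subset (s := Finset.range (n + 1))]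
  · refine Finset.sum_congr rfl fun m _ => ?_
    simp [coeff_exp, div_eq_inv_mul]
  · intro m hm
    by_contra hmn
    simp only [Finset.coe_range, Set.mem_Iio, not_lt] at hmn
    exact hm (by simp only [coeff_pow_eq_zero_of_lt hg (by omega : n < m), smul_zero])

theorem derivative_formalExp {g : ℚ⟦X⟧} (hg : constantCoeff g = 0) :
    d⁄dX ℚ (formalExp g) = d⁄dX ℚ g * formalExp g := by
  rw [formalExp_eq_subst_exp hg, derivative_subst_exp (HasSubst.of_constantCoeff_zero' hg)]

theorem constantCoeff_formalExp (g : ℚ⟦X⟧) : constantCoeff (formalExp g) = 1 := by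
  simp [formalExp]

theorem toddSeries_eq_bernoulli'PowerSeries : toddSeries = bernoulli'PowerSeries ℚ := by
  ext n
  simp [toddSeries, bernoulli'PowerSeries, bernoulli'_eq_bernoulli, mul_div_assoc]

theorem bernoulliPowerSeries_eq_bernoulli'PowerSeries_sub_X :
    bernoulliPowerSeries ℚ = bernoulli'PowerSeries ℚ - X := by
  ext n
  rcases eq_or_ne n 1 with rfl | hn
  · norm_num [bernoulliPowerSeries, bernoulli'PowerSeries, bernoulli_one, bernoulli'_one]
  · simp [bernoulliPowerSeries, bernoulli'PowerSeries, bernoulli_eq_bernoulli'_of_ne_one hn,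
      coeff_X, hn]

noncomputable def logToddSeries : ℚ⟦X⟧ :=
  - PowerSeries.mk fun k =>
      if k = 0 then (0 : ℚ) else bernoulli k / ((k : ℚ) * (k.factorial : ℚ))

theorem constantCoeff_logToddSeries : constantCoeff logToddSeries = 0 := by
  simp [logToddSeries]

theorem X_mul_derivative_logToddSeries :
    X * d⁄dX ℚ logToddSeries = 1 - bernoulliPowerSeries ℚ := by
  ext (_ | n)
  · simp [bernoulliPowerSeries]
  · rw [coeff_succ_X_mul, coeff_derivative, logToddSeries, map_neg, coeff_mk,
      if_neg n.succ_ne_zero, map_sub, coeff_one, if_neg n.succ_ne_zero, zero_sub,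
      bernoulliPowerSeries, coeff_mk, Algebra.algebraMap_self, RingHom.id_apply, Nat.factorial_succ]
    push_cast
    field_simp

theorem toddSeries_mul_exp_sub_one : toddSeries * (exp ℚ - 1) = X * exp ℚ := by
  rw [toddSeries_eq_bernoulli'PowerSeries, bernoulli'PowerSeries_mul_exp_sub_one]

theorem toddSeries_mul_one_sub_exp_neg : toddSeries * (1 - rescale (-1) (exp ℚ)) = X := by
  have hexp : exp ℚ * rescale (-1) (exp ℚ) = 1 := exp_mul_exp_neg_eq_one
  linear_combination (X - toddSeries) * hexp + rescale (-1) (exp ℚ) * toddSeries_mul_exp_sub_one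

theorem derivative_toddSeries :
    d⁄dX ℚ toddSeries = d⁄dX ℚ logToddSeries * toddSeries := by
  have hT := toddSeries_mul_exp_sub_one
  have hD := congrArg (d⁄dX ℚ) hT
  simp only [Derivation.leibniz, derivative_X, map_sub, derivative_exp,
    Derivation.map_one_eq_zero, smul_eq_mul] at hD
  have hL := X_mul_derivative_logToddSeries
  rw [bernoulliPowerSeries_eq_bernoulli'PowerSeries_sub_X,
    ← toddSeries_eq_bernoulli'PowerSeries] at hL
  refine mul_left_cancel₀ (mul_ne_zero X_ne_zero exp_sub_one_ne_zero) ?_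
  linear_combination X * hD - (exp ℚ - 1) * toddSeries * hL - (1 - toddSeries + X) * hT

/-- Exponential form of the Todd power series:
`Σ_{n≥0} (-1)^n (B_n/n!) X^n = exp(-Σ_{k≥1} (B_k/(k·k!)) X^k)` in `ℚ⟦X⟧`; moreover the
series `-Σ_{k≥1} (B_k/(k·k!)) X^k` has zero constant term, and the left-hand side is
indeed the series `P(X)` characterized by `P(X) · (1 - exp(-X)) = X`. -/
theorem toddSeries_eq_formalExp :
    toddSeries
      = formalExp (- PowerSeries.mk fun k =>
          if k = 0 then (0 : ℚ) else bernoulli k / ((k : ℚ) * (k.factorial : ℚ))) ∧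
    PowerSeries.constantCoeff
      (- PowerSeries.mk fun k =>
          if k = 0 then (0 : ℚ) else bernoulli k / ((k : ℚ) * (k.factorial : ℚ))) = 0 ∧
    toddSeries * (1 - PowerSeries.rescale (-1) (PowerSeries.exp ℚ)) = PowerSeries.X := by
  refine ⟨?_, constantCoeff_logToddSeries, toddSeries_mul_one_sub_exp_neg⟩
  refine eq_of_derivative_eq_mul_self derivative_toddSeries
    (derivative_formalExp constantCoeff_logToddSeries) ?_
  simp [constantCoeff_formalExp, toddSeries]
end
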